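/- arXiv:1503.07370 — 2 statements merged into one kernel-verified Lean document; each statement's English description precedes it below -/
import Mathlib

section
/- Let G be a group generated by a normal commutator-closed set X of elements of finite order dividing m, and suppose G is generated by finitely many elements x₁,…,x_d ∈ X. Let N be a normal subgroup of G of finite index such that X ∩ N = {1}. Then the subgroup L generated by the subgroups [N, x_i] (i = 1,…,d) is nilpotent of class at most d and has finite exponent dividing m^d. -/
/-!
Write `A i = [N, x i]`. It lies in the subgroup generated by the `N`-conjugates of `x i`; these
lie in `X` and are congruent modulo `N`, so their commutators lie in `X ∩ N = 1`. Hence each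
`A i` is abelian of exponent dividing `m`, and since the `A i` lie in `N` and are normalized by
`N`, they normalize each other.

For a join `L` of `d` abelian subgroups `A i` normalizing each other, the `k`-th term of the lower
central series of `L` lies in the join of the intersections of `k + 1` of the `A i`: for `g` in
`⋂ j ∈ s, A j` and `b ∈ A i`, the commutator `⁅g, b⁆` is trivial if `i ∈ s` and lies in
`⋂ j ∈ insert i s, A j` otherwise. There are no `d + 1` distinct indices, so `L` has class at
most `d`. Moreover `L = A 1 ⋯ A d`, and the `m`-th power of an element of `A i ⊔ E`, where `A i`
normalizes `E` and has exponent dividing `m`, lies in `E`; induction on the number of factors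
gives exponent dividing `m ^ d`.
-/

namespace Subgroup

variable {G : Type*} [Group G]

theorem le_normalizer_iInf {ι : Sort*} {H : ι → Subgroup G} {K : Subgroup G}
    (h : ∀ i, K ≤ normalizer (H i : Set G)) : K ≤ normalizer ((⨅ i, H i : Subgroup G) : Set G) :=
  (le_iInf h).trans (iInf_normalizer_le_normalizer_iInf H)

theorem le_normalizer_iSup {ι : Sort*} {H : ι → Subgroup G} {K : Subgroup G}
    (h : ∀ i, K ≤ normalizer (H i : Set G)) : K ≤ normalizer ((⨆ i, H i : Subgroup G) : Set G) :=
  (le_iInf h).trans (iInf_normalizer_le_normalizer_iSup H)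

theorem commutator_iSup_left_le {ι : Sort*} {H : ι → Subgroup G} {K M : Subgroup G}
    (hH : ∀ i, H i ≤ normalizer (M : Set G)) (h : ∀ i, ⁅H i, K⁆ ≤ M) : ⁅⨆ i, H i, K⁆ ≤ M := by
  rw [commutator_le]
  intro g hg k hk
  induction hg using iSup_induction' with
  | hp i g hg => exact h i (commutator_mem_commutator hg hk)
  | h1 => simp
  | hmul a b ha hb hak hbk =>
    rw [commutatorElement_mul_left_eq_conj_mul]
    exact mul_mem ((mem_normalizer_iff.mp (iSup_le hH ha) _).mp hbk) hak

theorem commutator_iSup_right_le {ι : Sort*} {H : Subgroup G} {K : ι → Subgroup G}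
    {M : Subgroup G} (hK : ∀ i, K i ≤ normalizer (M : Set G)) (h : ∀ i, ⁅H, K i⁆ ≤ M) :
    ⁅H, ⨆ i, K i⁆ ≤ M := by
  rw [commutator_comm]
  exact commutator_iSup_left_le hK fun i => commutator_comm (K i) H ▸ h i

theorem lowerCentralSeries_le_of_commutator_le {S : Subgroup G} {C : ℕ → Subgroup G}
    (h0 : S ≤ C 0) (hsucc : ∀ k, ⁅C k, S⁆ ≤ C (k + 1)) (n : ℕ) : S.lowerCentralSeries n ≤ C n := by
  induction n with
  | zero => exact h0
  | succ n ih => exact (commutator_mono ih le_rfl).trans (hsucc n)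

theorem inv_pow_mul_mul_pow_mem {H : Subgroup G} {k h : G} (hk : k ∈ normalizer (H : Set G))
    (hh : h ∈ H) (n : ℕ) : (k ^ n)⁻¹ * (k * h) ^ n ∈ H := by
  induction n with
  | zero => simp
  | succ n ih =>
    have hconj : k⁻¹ * ((k ^ n)⁻¹ * (k * h) ^ n) * k ∈ H := (mem_normalizer_iff''.mp hk _).mp ih
    have e : (k ^ (n + 1))⁻¹ * (k * h) ^ (n + 1) = k⁻¹ * ((k ^ n)⁻¹ * (k * h) ^ n) * k * h := by
      rw [pow_succ', pow_succ]; group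
    rw [e]
    exact mul_mem hconj hh

theorem pow_mem_of_mem_sup_of_le_normalizer {H K : Subgroup G} (hK : K ≤ normalizer (H : Set G))
    {n : ℕ} (hn : ∀ k ∈ K, k ^ n = 1) {g : G} (hg : g ∈ K ⊔ H) : g ^ n ∈ H := by
  rw [← SetLike.mem_coe, coe_mul_of_left_le_normalizer_right K H hK] at hg
  obtain ⟨k, hk, h, hh, rfl⟩ := hg
  simpa [hn k hk] using inv_pow_mul_mul_pow_mem (hK hk) hh n

section MutuallyNormalizing

variable {ι : Type*} (A : ι → Subgroup G)

def iSupInfOfCard (k : ℕ) : Subgroup G :=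
  ⨆ s : {s : Finset ι // s.card = k}, ⨅ i : s.1, A i

variable {A}

theorem iSup_le_iSupInfOfCard_one : ⨆ i, A i ≤ iSupInfOfCard A 1 :=
  iSup_le fun i => le_iSup_of_le ⟨{i}, Finset.card_singleton i⟩
    (le_iInf fun j => by rw [Finset.mem_singleton.mp j.2])

theorem iSupInfOfCard_eq_bot [Fintype ι] {k : ℕ} (hk : Fintype.card ι < k) :
    iSupInfOfCard A k = ⊥ := by
  have : IsEmpty {s : Finset ι // s.card = k} :=
    ⟨fun s => (s.1.card_le_univ.trans_lt hk).ne s.2⟩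
  exact iSup_of_empty _

variable (hnorm : ∀ i j, A i ≤ normalizer (A j : Set G))
include hnorm

theorem iSup_le_normalizer_iSupInfOfCard (k : ℕ) :
    ⨆ i, A i ≤ normalizer (iSupInfOfCard A k : Set G) :=
  le_normalizer_iSup fun _ => le_normalizer_iInf fun j => iSup_le fun i => hnorm i j

theorem commutator_iInf_le_iInf_insert [DecidableEq ι] {s : Finset ι} (hs : s.Nonempty) (i : ι) :
    ⁅⨅ j : s, A j, A i⁆ ≤ ⨅ j : (insert i s : Finset ι), A j := by
  obtain ⟨j₀, hj₀⟩ := hs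
  refine le_iInf fun ⟨j, hj⟩ => ?_
  rcases Finset.mem_insert.mp hj with rfl | hj
  · exact le_normalizer_iff_commutator_le_right.mp ((iInf_le _ ⟨j₀, hj₀⟩).trans (hnorm j₀ j))
  · have hAj : ⁅A j, A i⁆ ≤ A j := le_normalizer_iff_commutator_le_left.mp (hnorm i j)
    exact (commutator_mono (iInf_le (fun j : s => A j) ⟨j, hj⟩) le_rfl).trans hAj

theorem commutator_iSupInfOfCard_le [∀ i, IsMulCommutative (A i)] (k : ℕ) :
    ⁅iSupInfOfCard A (k + 1), ⨆ i, A i⁆ ≤ iSupInfOfCard A (k + 2) := by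
  classical
  have hL := iSup_le_normalizer_iSupInfOfCard hnorm (k + 2)
  refine commutator_iSup_left_le (fun s => ?_) fun ⟨s, hs⟩ => ?_
  · obtain ⟨j, hj⟩ := Finset.card_pos.mp (by rw [s.2]; omega)
    exact (iInf_le _ ⟨j, hj⟩).trans ((le_iSup A j).trans hL)
  refine commutator_iSup_right_le (fun i => (le_iSup A i).trans hL) fun i => ?_
  by_cases hi : i ∈ s
  · calc ⁅⨅ j : s, A j, A i⁆
        _ ≤ ⁅A i, A i⁆ := commutator_mono (iInf_le (fun j : s => A j) ⟨i, hi⟩) le_rfl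
        _ = ⊥ := commutator_self_eq_bot_iff.mpr inferInstance
        _ ≤ _ := bot_le
  · have hcard : (insert i s).card = k + 2 := by rw [Finset.card_insert_of_notMem hi, hs]
    exact (commutator_iInf_le_iInf_insert hnorm (Finset.card_pos.mp (by rw [hs]; omega)) i).trans
      (le_iSup_of_le (f := fun s : {s : Finset ι // s.card = k + 2} => ⨅ j : s.1, A j)
        ⟨insert i s, hcard⟩ le_rfl)

theorem lowerCentralSeries_iSup_eq_bot [Fintype ι] [∀ i, IsMulCommutative (A i)] :
    (⨆ i, A i).lowerCentralSeries (Fintype.card ι) = ⊥ :=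
  eq_bot_iff.mpr <|
    (lowerCentralSeries_le_of_commutator_le (C := fun k => iSupInfOfCard A (k + 1))
      iSup_le_iSupInfOfCard_one (commutator_iSupInfOfCard_le hnorm) _).trans
    (iSupInfOfCard_eq_bot (Nat.lt_succ_self _)).le

theorem pow_eq_one_of_mem_biSup [DecidableEq ι] {m : ℕ} (hexp : ∀ i, ∀ a ∈ A i, a ^ m = 1)
    (s : Finset ι) : ∀ g ∈ ⨆ i ∈ s, A i, g ^ m ^ s.card = 1 := by
  induction s using Finset.induction_on with
  | empty => simp
  | insert i s hi ih =>
    intro g hg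
    rw [Finset.iSup_insert] at hg
    have hg' := pow_mem_of_mem_sup_of_le_normalizer
      (le_normalizer_iSup fun j => le_normalizer_iSup fun _ => hnorm i j) (hexp i) hg
    rw [Finset.card_insert_of_notMem hi, pow_succ', pow_mul]
    exact ih _ hg'

theorem pow_eq_one_of_mem_iSup [Fintype ι] {m : ℕ} (hexp : ∀ i, ∀ a ∈ A i, a ^ m = 1) {g : G}
    (hg : g ∈ ⨆ i, A i) : g ^ m ^ Fintype.card ι = 1 := by
  classical
  exact pow_eq_one_of_mem_biSup hnorm hexp Finset.univ g (by simpa using hg)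

end MutuallyNormalizing

theorem pow_eq_one_of_mem_closure {S : Set G} {m : ℕ} (hS : ∀ a ∈ S, ∀ b ∈ S, Commute a b)
    (hm : ∀ a ∈ S, a ^ m = 1) {g : G} (hg : g ∈ closure S) : g ^ m = 1 := by
  have := isMulCommutative_closure fun a ha b hb => (hS a ha b hb).eq
  induction hg using closure_induction with
  | mem a ha => exact hm a ha
  | one => exact one_pow m
  | mul a b ha hb hma hmb => rw [Commute.mul_pow (setLike_mul_comm ha hb), hma, hmb, one_mul]
  | inv a _ hma => rw [inv_pow, hma, inv_one]

section CommutatorWith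

variable (N : Subgroup G) (x : G)

/-- The paper's `[N, x]`, written out because Mathlib's `⁅a, b⁆` is `a * b * a⁻¹ * b⁻¹`. -/
def commutatorWith : Subgroup G :=
  closure {z | ∃ n ∈ N, z = n⁻¹ * x⁻¹ * n * x}

variable {N x}

theorem commutatorWith_le [N.Normal] : commutatorWith N x ≤ N := by
  refine (closure_le _).mpr ?_
  rintro _ ⟨n, hn, rfl⟩
  rw [mul_assoc n⁻¹, mul_assoc n⁻¹]
  exact mul_mem (inv_mem hn) (by simpa [mul_assoc] using Normal.conj_mem ‹_› n hn x⁻¹)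

theorem le_normalizer_commutatorWith : N ≤ normalizer (commutatorWith N x : Set G) := by
  refine le_normalizer_closure_iff.mpr ?_
  rintro g hg _ ⟨n, hn, rfl⟩
  have e : g * (n⁻¹ * x⁻¹ * n * x) * g⁻¹ =
      (n * g⁻¹)⁻¹ * x⁻¹ * (n * g⁻¹) * x * (g⁻¹⁻¹ * x⁻¹ * g⁻¹ * x)⁻¹ := by group
  rw [e]
  exact mul_mem (subset_closure ⟨_, mul_mem hn (inv_mem hg), rfl⟩)
    (inv_mem (subset_closure ⟨_, inv_mem hg, rfl⟩))

theorem commutatorWith_le_closure_conj :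
    commutatorWith N x ≤ closure {y | ∃ n ∈ N, y = n⁻¹ * x * n} := by
  refine (closure_le _).mpr ?_
  rintro _ ⟨n, hn, rfl⟩
  have e : n⁻¹ * x⁻¹ * n * x = (n⁻¹ * x * n)⁻¹ * (1⁻¹ * x * 1) := by group
  rw [SetLike.mem_coe, e]
  exact mul_mem (inv_mem (subset_closure ⟨n, hn, rfl⟩)) (subset_closure ⟨1, one_mem N, rfl⟩)

theorem closure_commutatorWith_eq_iSup {ι : Type*} (x : ι → G) :
    closure {z | ∃ i, ∃ n ∈ N, z = n⁻¹ * (x i)⁻¹ * n * x i} = ⨆ i, commutatorWith N (x i) := by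
  simp only [commutatorWith, ← closure_iUnion]
  congr 1
  ext
  simp

end CommutatorWith

section CommutatorClosed

variable {X : Set G} {N : Subgroup G}

theorem commute_of_commutator_mem (hcomm : ∀ x ∈ X, ∀ y ∈ X, x⁻¹ * y⁻¹ * x * y ∈ X)
    (hXN : X ∩ ↑N = {1}) {u v : G} (hu : u ∈ X) (hv : v ∈ X) (h : u⁻¹ * v⁻¹ * u * v ∈ N) :
    Commute u v := by
  have h1 : u⁻¹ * v⁻¹ * u * v ∈ X ∩ ↑N := ⟨hcomm u hu v hv, h⟩
  rw [hXN, Set.mem_singleton_iff] at h1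
  refine Commute.inv_inv_iff.mp (commutatorElement_eq_one_iff_commute.mp ?_)
  rwa [commutatorElement_def, inv_inv, inv_inv]

theorem commute_conj_of_mem [N.Normal] (hconj : ∀ x ∈ X, ∀ g : G, g⁻¹ * x * g ∈ X)
    (hcomm : ∀ x ∈ X, ∀ y ∈ X, x⁻¹ * y⁻¹ * x * y ∈ X) (hXN : X ∩ ↑N = {1}) {x : G} (hx : x ∈ X) :
    ∀ a ∈ {y | ∃ n ∈ N, y = n⁻¹ * x * n}, ∀ b ∈ {y | ∃ n ∈ N, y = n⁻¹ * x * n}, Commute a b := by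
  rintro _ ⟨p, hp, rfl⟩ _ ⟨q, hq, rfl⟩
  refine commute_of_commutator_mem hcomm hXN (hconj x hx p) (hconj x hx q) ?_
  rw [← QuotientGroup.eq_one_iff]
  simp only [QuotientGroup.mk_mul, QuotientGroup.mk_inv, (QuotientGroup.eq_one_iff p).mpr hp,
    (QuotientGroup.eq_one_iff q).mpr hq, one_mul, mul_one, inv_one]
  group

theorem isMulCommutative_commutatorWith [N.Normal] (hconj : ∀ x ∈ X, ∀ g : G, g⁻¹ * x * g ∈ X)
    (hcomm : ∀ x ∈ X, ∀ y ∈ X, x⁻¹ * y⁻¹ * x * y ∈ X) (hXN : X ∩ ↑N = {1}) {x : G} (hx : x ∈ X) :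
    IsMulCommutative (commutatorWith N x) :=
  have := isMulCommutative_closure fun a ha b hb =>
    (commute_conj_of_mem hconj hcomm hXN hx a ha b hb).eq
  .of_setLike_mul_comm fun _ ha _ hb =>
    setLike_mul_comm (commutatorWith_le_closure_conj ha) (commutatorWith_le_closure_conj hb)

theorem pow_eq_one_of_mem_commutatorWith [N.Normal] (hconj : ∀ x ∈ X, ∀ g : G, g⁻¹ * x * g ∈ X)
    (hcomm : ∀ x ∈ X, ∀ y ∈ X, x⁻¹ * y⁻¹ * x * y ∈ X) (hXN : X ∩ ↑N = {1}) {m : ℕ}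
    (hord : ∀ x ∈ X, x ^ m = 1) {x : G} (hx : x ∈ X) {g : G} (hg : g ∈ commutatorWith N x) :
    g ^ m = 1 :=
  pow_eq_one_of_mem_closure (commute_conj_of_mem hconj hcomm hXN hx)
    (fun _ ⟨n, _, e⟩ => e ▸ hord _ (hconj x hx n)) (commutatorWith_le_closure_conj hg)

end CommutatorClosed

end Subgroup

open Subgroup

theorem stmt_4_general {G : Type*} [Group G] (m d : ℕ) (X : Set G)
    (hconj : ∀ x ∈ X, ∀ g : G, g⁻¹ * x * g ∈ X)
    (hcomm : ∀ x ∈ X, ∀ y ∈ X, x⁻¹ * y⁻¹ * x * y ∈ X)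
    (hord : ∀ x ∈ X, x ^ m = 1)
    (x : Fin d → G) (hx : ∀ i, x i ∈ X)
    (N : Subgroup G) [N.Normal]
    (hXN : X ∩ ↑N = {1}) :
    (⊤ : Subgroup
        ↥(Subgroup.closure {z : G | ∃ i : Fin d, ∃ n ∈ N, z = n⁻¹ * (x i)⁻¹ * n * x i})).lowerCentralSeries d = ⊥ ∧
      ∀ g ∈ Subgroup.closure {z : G | ∃ i : Fin d, ∃ n ∈ N, z = n⁻¹ * (x i)⁻¹ * n * x i},
        g ^ m ^ d = 1 := by
  have hnorm (i j : Fin d) :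
      commutatorWith N (x i) ≤ normalizer (commutatorWith N (x j) : Set G) :=
    commutatorWith_le.trans le_normalizer_commutatorWith
  have hAbelian (i : Fin d) := isMulCommutative_commutatorWith hconj hcomm hXN (hx i)
  rw [closure_commutatorWith_eq_iSup]
  refine ⟨?_, fun g hg => ?_⟩
  · rw [← (map_injective (subtype_injective _)).eq_iff, top_subtype_lowerCentralSeries,
      Subgroup.map_bot]
    simpa using lowerCentralSeries_iSup_eq_bot hnorm
  · simpa using pow_eq_one_of_mem_iSup hnorm
      (fun i _ => pow_eq_one_of_mem_commutatorWith hconj hcomm hXN hord (hx i)) hg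

/-- Lemma on the subgroup L generated by the [N, xᵢ]: it is nilpotent of class at most d
and of exponent dividing m^d. -/
theorem stmt_4 {G : Type*} [Group G] (m d : ℕ) (hm : 0 < m) (X : Set G)
    (hconj : ∀ x ∈ X, ∀ g : G, g⁻¹ * x * g ∈ X)
    (hcomm : ∀ x ∈ X, ∀ y ∈ X, x⁻¹ * y⁻¹ * x * y ∈ X)
    (hord : ∀ x ∈ X, x ^ m = 1)
    (hGX : Subgroup.closure X = ⊤)
    (x : Fin d → G) (hx : ∀ i, x i ∈ X)
    (hgen : Subgroup.closure (Set.range x) = ⊤)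
    (N : Subgroup G) [N.Normal] [N.FiniteIndex]
    (hXN : X ∩ ↑N = {1}) :
    (⊤ : Subgroup
        ↥(Subgroup.closure {z : G | ∃ i : Fin d, ∃ n ∈ N, z = n⁻¹ * (x i)⁻¹ * n * x i})).lowerCentralSeries d = ⊥ ∧
      ∀ g ∈ Subgroup.closure {z : G | ∃ i : Fin d, ∃ n ∈ N, z = n⁻¹ * (x i)⁻¹ * n * x i},
        g ^ m ^ d = 1 :=
  stmt_4_general m d X hconj hcomm hord x hx N hXN
end

section
/- Let w be a group word and G a Cartesian product of groups G_i. Suppose there is a constant ε such that for every i, every subgroup of w(G_i) generated by finitely many w-values of G_i is nilpotent of class at most ε. Then the verbal subgroup w(G) is locally nilpotent. -/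
/-!
Let `H ≤ w(G)` be finitely generated. Then `H` lies in the subgroup generated by finitely many
`w`-values `T` of `G = ∏ Gᵢ`, hence in `∏ᵢ ⟨Tᵢ⟩`, where `Tᵢ` is the set of `i`-th coordinates of `T`.
Each `Tᵢ` consists of `w`-values of `Gᵢ`, so `⟨Tᵢ⟩` has class at most `ε`; as this bound is
uniform in `i`, the product and therefore `H` have class at most `ε`.
-/

open Subgroup

section WordValues

variable {α : Type*} (w : FreeGroup α)

def wordValues (G : Type*) [Group G] : Set G :=
  {x | ∃ g : α → G, FreeGroup.lift g w = x}

variable {w}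

theorem MonoidHom.map_mem_wordValues {G H : Type*} [Group G] [Group H] (f : G →* H) {x : G}
    (hx : x ∈ wordValues w G) : f x ∈ wordValues w H := by
  obtain ⟨g, rfl⟩ := hx
  exact ⟨f ∘ g, (FreeGroup.lift_unique (f.comp (FreeGroup.lift g)) (by simp)).symm⟩

end WordValues

namespace Subgroup

variable {G : Type*} [Group G]

theorem exists_finite_subset_of_mem_closure {S : Set G} {x : G} (hx : x ∈ closure S) :
    ∃ T ⊆ S, T.Finite ∧ x ∈ closure T := by
  induction hx using closure_induction with
  | mem y hy => exact ⟨{y}, by simpa using hy, Set.finite_singleton y, subset_closure rfl⟩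
  | one => exact ⟨∅, Set.empty_subset S, Set.finite_empty, one_mem _⟩
  | mul y z _ _ hy hz =>
    obtain ⟨T₁, hT₁S, hT₁, hyT₁⟩ := hy
    obtain ⟨T₂, hT₂S, hT₂, hzT₂⟩ := hz
    exact ⟨T₁ ∪ T₂, Set.union_subset hT₁S hT₂S, hT₁.union hT₂,
      mul_mem (closure_mono Set.subset_union_left hyT₁)
        (closure_mono Set.subset_union_right hzT₂)⟩
  | inv y _ hy =>
    obtain ⟨T, hTS, hT, hyT⟩ := hy
    exact ⟨T, hTS, hT, inv_mem hyT⟩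

theorem FG.exists_finite_subset_of_le_closure {H : Subgroup G} (hH : H.FG) {S : Set G}
    (hHS : H ≤ closure S) : ∃ T ⊆ S, T.Finite ∧ H ≤ closure T := by
  obtain ⟨F, rfl⟩ := hH
  have hF : ∀ x ∈ F, ∃ T ⊆ S, T.Finite ∧ x ∈ closure T := fun x hx =>
    exists_finite_subset_of_mem_closure (hHS (subset_closure hx))
  choose! T hTS hT hxT using hF
  refine ⟨⋃ x ∈ F, T x, Set.iUnion₂_subset hTS, F.finite_toSet.biUnion hT, ?_⟩
  rw [closure_le]
  exact fun x hx => closure_mono (Set.subset_biUnion_of_mem (u := T) hx) (hxT x hx)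

theorem lowerCentralSeries_eq_bot_of_top_eq_bot {H : Subgroup G} {n : ℕ}
    (h : (⊤ : Subgroup H).lowerCentralSeries n = ⊥) : H.lowerCentralSeries n = ⊥ := by
  rw [← top_subtype_lowerCentralSeries, h, map_bot]

variable {η : Type*} {Gs : η → Type*} [∀ i, Group (Gs i)]

theorem closure_le_pi_closure_image_eval (T : Set (∀ i, Gs i)) :
    closure T ≤ pi Set.univ fun i => closure (Function.eval i '' T) :=
  closure_le _ |>.mpr fun x hx _ _ => subset_closure ⟨x, hx, rfl⟩

theorem lowerCentralSeries_eq_bot_of_le_pi {H : Subgroup (∀ i, Gs i)} {Ss : ∀ i, Subgroup (Gs i)}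
    {n : ℕ} (hH : H ≤ pi Set.univ Ss) (hS : ∀ i, (Ss i).lowerCentralSeries n = ⊥) :
    H.lowerCentralSeries n = ⊥ := by
  rw [eq_bot_iff]
  calc H.lowerCentralSeries n
      ≤ (pi Set.univ Ss).lowerCentralSeries n := lowerCentralSeries_mono n hH
    _ ≤ pi Set.univ fun i => (Ss i).lowerCentralSeries n := lowerCentralSeries_pi_le Ss n
    _ = ⊥ := (pi_eq_bot_iff _).mpr hS

end Subgroup

/-- If G is a Cartesian product of groups Gᵢ and there is ε such that in every Gᵢ each
subgroup generated by finitely many w-values is nilpotent of class at most ε, then the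
verbal subgroup w(G) is locally nilpotent. -/
theorem stmt_12 {ι : Type*} (G : ι → Type*) [∀ i, Group (G i)]
    (k : ℕ) (w : FreeGroup (Fin k))
    (hε : ∃ ε : ℕ, ∀ i : ι, ∀ H : Subgroup (G i),
        (∃ S : Finset (G i),
            (↑S : Set (G i)) ⊆ {x | ∃ g : Fin k → G i, FreeGroup.lift g w = x} ∧
            Subgroup.closure (↑S : Set (G i)) = H) →
        Subgroup.lowerCentralSeries (⊤ : Subgroup ↥H) ε = ⊥) :
    ∀ H : Subgroup (∀ i, G i),
      H ≤ Subgroup.closure {x | ∃ g : Fin k → (∀ i, G i), FreeGroup.lift g w = x} →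
      H.FG → Group.IsNilpotent ↥H := by
  obtain ⟨ε, hε⟩ := hε
  intro H hHw hH
  obtain ⟨T, hTw, hT, hHT⟩ := hH.exists_finite_subset_of_le_closure hHw
  have hTi : ∀ i, (closure (Function.eval i '' T)).lowerCentralSeries ε = ⊥ := by
    intro i
    refine lowerCentralSeries_eq_bot_of_top_eq_bot (hε i _ ⟨(hT.image (Function.eval i)).toFinset, ?_, by simp⟩)
    rw [Set.Finite.coe_toFinset, Set.image_subset_iff]
    exact fun x hx => (Pi.evalMonoidHom G i).map_mem_wordValues (hTw hx)
  exact isNilpotent_of_lowerCentralSeries_eq_bot <|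
    lowerCentralSeries_eq_bot_of_le_pi (hHT.trans (closure_le_pi_closure_image_eval T)) hTi
end
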